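/- arXiv:1801.07925 — 5 statements merged into one kernel-verified Lean document; each statement's English description precedes it below -/
import Mathlib

section
/- For every admissible u, the functional φ3 can be rewritten in pairwise center-of-mass and relative coordinates as φ3(u) = −Re ∫_{ℝ¹²} conj(u(P1, P2/(1+m) + q2, m P2/(1+m) − q2)) u(P2, P1/(1+m) + q1, m P1/(1+m) − q1) / ( (1/(1+m))(|P1|² + |P2|²) + ((1+m)/m)(|q1|² + |q2|²) + μ ) dP1 dP2 dq1 dq2. -/
open MeasureTheory Real
open scoped RealInnerProductSpace

noncomputable section

abbrev V3 : Type := EuclideanSpace ℝ (Fin 3)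

def h0 (m : ℝ) (p1 p2 k1 k2 : V3) : ℝ :=
  ‖p1‖ ^ 2 + ‖p2‖ ^ 2 + (1 / m) * (‖k1‖ ^ 2 + ‖k2‖ ^ 2)

def phi3Integrand (m μ : ℝ) (u : V3 → V3 → V3 → ℂ) (x : V3 × V3 × V3 × V3) : ℂ :=
  (starRingEnd ℂ) (u (x.1 + x.2.2.1) x.2.1 x.2.2.2) * u (x.2.1 + x.2.2.2) x.1 x.2.2.1 /
    ((h0 m x.1 x.2.1 x.2.2.1 x.2.2.2 + μ : ℝ) : ℂ)

def phi3 (m μ : ℝ) (u : V3 → V3 → V3 → ℂ) : ℝ :=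
  - (∫ x : V3 × V3 × V3 × V3, phi3Integrand m μ u x).re

-- Helper instances (instance search has trouble with nested product volumes here).
instance sf2 : SFinite ((volume : Measure V3).prod (volume : Measure V3)) := inferInstance
instance sf3 : SFinite ((volume : Measure V3).prod
    ((volume : Measure V3).prod (volume : Measure V3))) :=
  Measure.prod.instSFinite
instance sf4 : SFinite ((volume : Measure V3).prod ((volume : Measure V3).prod
    ((volume : Measure V3).prod (volume : Measure V3)))) :=
  Measure.prod.instSFinite
instance sf2' : SFinite ((volume : Measure (V3 × V3)).prod (volume : Measure (V3 × V3))) :=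
  Measure.prod.instSFinite

/-- The map `(P, q) ↦ (P/(1+m) + q, mP/(1+m) - q)` preserves the volume. -/
lemma mp_s (m : ℝ) (hm : 0 < m) :
    MeasurePreserving (fun z : V3 × V3 =>
      ((1 / (1 + m)) • z.1 + z.2, (m / (1 + m)) • z.1 - z.2)) volume volume := by
  have hB : MeasurePreserving (fun z : V3 × V3 => (z.1, (m / (1 + m)) • z.1 - z.2))
      volume volume :=
    (MeasurePreserving.id volume).skew_product (by fun_prop)
      (Filter.Eventually.of_forall fun a => Measure.map_sub_left_eq_self volume _)
  have hA : MeasurePreserving (fun z : V3 × V3 => (z.1 - z.2, z.2)) volume volume :=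
    measurePreserving_sub_prod volume volume
  have h := hA.comp hB
  convert h using 1
  funext z
  simp only [Function.comp_apply]
  have h1 : (1 + m) ≠ 0 := by positivity
  refine Prod.ext ?_ rfl
  show (1 / (1 + m)) • z.1 + z.2 = z.1 - ((m / (1 + m)) • z.1 - z.2)
  match_scalars <;> field_simp <;> ring

lemma mp_pi : MeasurePreserving
    (fun z : V3 × V3 × V3 × V3 => ((z.1, z.2.2.1), (z.2.1, z.2.2.2)))
    volume volume := by
  have h1 : MeasurePreserving
      (fun z : V3 × V3 × V3 × V3 => (z.1, ((z.2.1, z.2.2.1), z.2.2.2)))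
      volume volume :=
    (MeasurePreserving.id volume).prod
      ((measurePreserving_prodAssoc volume volume volume).symm MeasurableEquiv.prodAssoc)
  have h2 : MeasurePreserving
      (fun w : V3 × ((V3 × V3) × V3) => (w.1, ((w.2.1.2, w.2.1.1), w.2.2)))
      volume volume :=
    (MeasurePreserving.id volume).prod
      ((Measure.measurePreserving_swap (μ := (volume : Measure V3)) (ν := (volume : Measure V3))).prod (MeasurePreserving.id volume))
  have h3 : MeasurePreserving
      (fun w : V3 × ((V3 × V3) × V3) => (w.1, (w.2.1.1, (w.2.1.2, w.2.2))))
      volume volume :=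
    (MeasurePreserving.id volume).prod (measurePreserving_prodAssoc volume volume volume)
  have h4 : MeasurePreserving
      (fun w : V3 × (V3 × (V3 × V3)) => ((w.1, w.2.1), w.2.2))
      volume volume :=
    (measurePreserving_prodAssoc volume volume volume).symm MeasurableEquiv.prodAssoc
  exact h4.comp (h3.comp (h2.comp h1))

lemma mp_pi_inv : MeasurePreserving
    (fun w : (V3 × V3) × (V3 × V3) => (w.1.1, w.2.1, w.1.2, w.2.2))
    volume volume := by
  have h4 : MeasurePreserving
      (fun w : (V3 × V3) × (V3 × V3) => (w.1.1, (w.1.2, w.2)))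
      volume volume :=
    measurePreserving_prodAssoc volume volume volume
  have h3 : MeasurePreserving
      (fun w : V3 × (V3 × (V3 × V3)) => (w.1, ((w.2.1, w.2.2.1), w.2.2.2)))
      volume volume :=
    (MeasurePreserving.id volume).prod
      ((measurePreserving_prodAssoc volume volume volume).symm MeasurableEquiv.prodAssoc)
  have h2 : MeasurePreserving
      (fun w : V3 × ((V3 × V3) × V3) => (w.1, ((w.2.1.2, w.2.1.1), w.2.2)))
      volume volume :=
    (MeasurePreserving.id volume).prod
      ((Measure.measurePreserving_swap (μ := (volume : Measure V3)) (ν := (volume : Measure V3))).prod (MeasurePreserving.id volume))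
  have h1 : MeasurePreserving
      (fun w : V3 × ((V3 × V3) × V3) => (w.1, (w.2.1.1, (w.2.1.2, w.2.2))))
      volume volume :=
    (MeasurePreserving.id volume).prod (measurePreserving_prodAssoc volume volume volume)
  exact h1.comp (h2.comp (h3.comp h4))

lemma mp_Phi (m : ℝ) (hm : 0 < m) :
    MeasurePreserving (fun z : V3 × V3 × V3 × V3 =>
      ((1 / (1 + m)) • z.1 + z.2.2.1,
       (1 / (1 + m)) • z.2.1 + z.2.2.2,
       (m / (1 + m)) • z.1 - z.2.2.1,
       (m / (1 + m)) • z.2.1 - z.2.2.2)) volume volume := by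
  exact mp_pi_inv.comp (((mp_s m hm).prod (mp_s m hm)).comp mp_pi)

lemma norm_combo_add (c : ℝ) (P q : V3) :
    ‖c • P + q‖ ^ 2 = c ^ 2 * ‖P‖ ^ 2 + 2 * (c * ⟪P, q⟫) + ‖q‖ ^ 2 := by
  rw [norm_add_sq_real, norm_smul, real_inner_smul_left]
  rw [mul_pow, Real.norm_eq_abs, sq_abs]

lemma norm_combo_sub (c : ℝ) (P q : V3) :
    ‖c • P - q‖ ^ 2 = c ^ 2 * ‖P‖ ^ 2 - 2 * (c * ⟪P, q⟫) + ‖q‖ ^ 2 := by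
  rw [norm_sub_sq_real, norm_smul, real_inner_smul_left]
  rw [mul_pow, Real.norm_eq_abs, sq_abs]

/-- rewriting `φ3` in pairwise center-of-mass and relative coordinates.
The integration variables are `(P1, P2, q1, q2)`. -/
theorem phi3_center_of_mass (m μ : ℝ) (hm : 0 < m) (hμ : 0 < μ)
    (u : V3 → V3 → V3 → ℂ)
    (huL2 : MemLp (fun x : V3 × V3 × V3 => u x.1 x.2.1 x.2.2) 2 volume)
    (huInt : Integrable (phi3Integrand m μ u)) :
    phi3 m μ u =
      - (∫ x : V3 × V3 × V3 × V3,
          (starRingEnd ℂ)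
              (u x.1 ((1 / (1 + m)) • x.2.1 + x.2.2.2) ((m / (1 + m)) • x.2.1 - x.2.2.2)) *
            u x.2.1 ((1 / (1 + m)) • x.1 + x.2.2.1) ((m / (1 + m)) • x.1 - x.2.2.1) /
            (((1 / (1 + m)) * (‖x.1‖ ^ 2 + ‖x.2.1‖ ^ 2) +
                ((1 + m) / m) * (‖x.2.2.1‖ ^ 2 + ‖x.2.2.2‖ ^ 2) + μ : ℝ) : ℂ)).re := by
  have hm1 : (1 + m) ≠ 0 := by positivity
  have hm0 : m ≠ 0 := ne_of_gt hm
  set Φ : V3 × V3 × V3 × V3 → V3 × V3 × V3 × V3 := fun z =>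
      ((1 / (1 + m)) • z.1 + z.2.2.1,
       (1 / (1 + m)) • z.2.1 + z.2.2.2,
       (m / (1 + m)) • z.1 - z.2.2.1,
       (m / (1 + m)) • z.2.1 - z.2.2.2) with hΦdef
  have hΦ : MeasurePreserving Φ volume volume := mp_Phi m hm
  have key : (∫ x : V3 × V3 × V3 × V3, phi3Integrand m μ u x)
      = ∫ x : V3 × V3 × V3 × V3, phi3Integrand m μ u (Φ x) := by
    conv_lhs => rw [← hΦ.map_eq]
    rw [integral_map hΦ.aemeasurable]
    rw [hΦ.map_eq]
    exact huInt.aestronglyMeasurable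
  unfold phi3
  rw [key]
  congr 1
  congr 1
  refine integral_congr_ae (Filter.Eventually.of_forall fun x => ?_)
  have hsum : ∀ P q : V3, ((1 / (1 + m)) • P + q) + ((m / (1 + m)) • P - q) = P := by
    intro P q
    match_scalars <;> field_simp <;> ring
  have hden : h0 m ((1 / (1 + m)) • x.1 + x.2.2.1) ((1 / (1 + m)) • x.2.1 + x.2.2.2)
      ((m / (1 + m)) • x.1 - x.2.2.1) ((m / (1 + m)) • x.2.1 - x.2.2.2)
      = (1 / (1 + m)) * (‖x.1‖ ^ 2 + ‖x.2.1‖ ^ 2) +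
        ((1 + m) / m) * (‖x.2.2.1‖ ^ 2 + ‖x.2.2.2‖ ^ 2) := by
    unfold h0
    rw [norm_combo_add, norm_combo_add, norm_combo_sub, norm_combo_sub]
    field_simp
    ring
  show phi3Integrand m μ u (Φ x) = _
  unfold phi3Integrand
  simp only [hΦdef]
  rw [hsum x.1 x.2.2.1, hsum x.2.1 x.2.2.2, hden]
end
end

section
/- Let w : ℝ³ × ℝ³ × ℝ³ → (0,∞) be measurable and set χ(q,P1,P2) = u(P1, P2/(1+m) + q, m P2/(1+m) − q) · w(q,P1,P2). Then, provided all integrands below are absolutely integrable, φ3(u) = ∫_{ℝ¹²} [ (1/2) |χ(q2,P1,P2) − χ(q1,P2,P1)|² − |χ(q2,P1,P2)|² ] / ( w(q2,P1,P2) w(q1,P2,P1) ( (1/(1+m))(|P1|² + |P2|²) + ((1+m)/m)(|q1|² + |q2|²) + μ ) ) dP1 dP2 dq1 dq2. -/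
open MeasureTheory Real
open scoped RealInnerProductSpace

noncomputable section

/-- `χ_w(q,P1,P2) = u(P1, P2/(1+m) + q, m P2/(1+m) − q) · w(q,P1,P2)`. -/
def chiW (m : ℝ) (u : V3 → V3 → V3 → ℂ) (w : V3 → V3 → V3 → ℝ) (q P1 P2 : V3) : ℂ :=
  u P1 ((1 / (1 + m)) • P2 + q) ((m / (1 + m)) • P2 - q) * ((w q P1 P2 : ℝ) : ℂ)

namespace Phi3CS

instance i1 : SigmaFinite (volume : Measure (V3 × V3)) := inferInstance
instance i2 : SigmaFinite (volume : Measure (V3 × V3 × V3)) :=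
  (inferInstance : SigmaFinite ((volume : Measure V3).prod (volume : Measure (V3 × V3))))
instance i3 : SigmaFinite (volume : Measure (V3 × V3 × V3 × V3)) :=
  (inferInstance : SigmaFinite ((volume : Measure V3).prod (volume : Measure (V3 × V3 × V3))))
instance i4 : SigmaFinite (volume : Measure ((V3 × V3) × V3 × V3)) :=
  (inferInstance : SigmaFinite ((volume : Measure (V3 × V3)).prod (volume : Measure (V3 × V3))))

/-- The change of variables `(P1,P2,q1,q2) ↦ (p1,p2,k1,k2)`. -/
def Tmap (m : ℝ) (x : V3 × V3 × V3 × V3) : V3 × V3 × V3 × V3 :=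
  ((1 / (1 + m)) • x.1 + x.2.2.1, (1 / (1 + m)) • x.2.1 + x.2.2.2,
   (m / (1 + m)) • x.1 - x.2.2.1, (m / (1 + m)) • x.2.1 - x.2.2.2)

/-- The symmetry `(P1,P2,q1,q2) ↦ (P2,P1,q2,q1)`. -/
def sigmaMap (x : V3 × V3 × V3 × V3) : V3 × V3 × V3 × V3 :=
  (x.2.1, x.1, x.2.2.2, x.2.2.1)

lemma mp_S (m : ℝ) (hm : 0 < m) :
    MeasurePreserving
      (fun x : V3 × V3 => ((1 / (1 + m)) • x.1 + x.2, (m / (1 + m)) • x.1 - x.2))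
      volume volume := by
  have h1m : (0:ℝ) < 1 + m := by linarith
  have hneg : MeasurePreserving (fun x : V3 × V3 => (x.1, -x.2)) volume volume :=
    (MeasurePreserving.id volume).prod (Measure.measurePreserving_neg volume)
  have hsh2 : MeasurePreserving
      (fun x : V3 × V3 => (x.1, x.2 + (m / (1 + m)) • x.1)) volume volume :=
    (MeasurePreserving.id (volume : Measure V3)).skew_product
      (g := fun P q => q + (m / (1 + m)) • P)
      (measurable_snd.add (by fun_prop))
      (Filter.Eventually.of_forall fun P =>
        (measurePreserving_add_right volume ((m / (1 + m)) • P)).map_eq)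
  have hsh1' : MeasurePreserving (fun x : V3 × V3 => (x.1, x.2 - x.1)) volume volume :=
    (MeasurePreserving.id (volume : Measure V3)).skew_product (g := fun P q => q - P)
      (measurable_snd.sub measurable_fst)
      (Filter.Eventually.of_forall fun P => (measurePreserving_sub_right volume P).map_eq)
  have hsh1 : MeasurePreserving (fun x : V3 × V3 => (x.1 - x.2, x.2)) volume volume :=
    (Measure.measurePreserving_swap.comp hsh1').comp Measure.measurePreserving_swap
  have hS := hsh1.comp (hsh2.comp hneg)
  have heq : ((fun x : V3 × V3 => (x.1 - x.2, x.2)) ∘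
      ((fun x : V3 × V3 => (x.1, x.2 + (m / (1 + m)) • x.1)) ∘
        (fun x : V3 × V3 => (x.1, -x.2)))) =
      fun x : V3 × V3 => ((1 / (1 + m)) • x.1 + x.2, (m / (1 + m)) • x.1 - x.2) := by
    funext x
    have hc : (1:ℝ) / (1 + m) = 1 - m / (1 + m) := by field_simp; ring
    refine Prod.ext ?_ ?_
    · show x.1 - (-x.2 + (m / (1 + m)) • x.1) = (1 / (1 + m)) • x.1 + x.2
      rw [hc]; module
    · show -x.2 + (m / (1 + m)) • x.1 = (m / (1 + m)) • x.1 - x.2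
      module
  rwa [heq] at hS

lemma mp_B3 {γ : Type*} [MeasureSpace γ] [SigmaFinite (volume : Measure γ)] :
    MeasurePreserving (fun x : V3 × V3 × γ => (x.2.1, x.1, x.2.2)) volume volume := by
  have h1 : MeasurePreserving
      (MeasurableEquiv.prodAssoc.symm : V3 × V3 × γ ≃ᵐ (V3 × V3) × γ) volume volume :=
    MeasurePreserving.symm _ volume_preserving_prodAssoc
  have h2 : MeasurePreserving (Prod.map (Prod.swap : V3 × V3 → V3 × V3) (id : γ → γ))
      volume volume :=
    (Measure.measurePreserving_swap (μ := (volume : Measure V3)) (ν := volume)).prod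
      (MeasurePreserving.id volume)
  have h3 : MeasurePreserving
      (MeasurableEquiv.prodAssoc : (V3 × V3) × γ ≃ᵐ V3 × V3 × γ) volume volume :=
    volume_preserving_prodAssoc
  exact (h3.comp (h2.comp h1))

lemma mp_rho : MeasurePreserving
    (fun x : V3 × V3 × V3 × V3 => ((x.1, x.2.2.1), (x.2.1, x.2.2.2)))
    volume (volume : Measure ((V3 × V3) × V3 × V3)) := by
  have h1 : MeasurePreserving (Prod.map (id : V3 → V3)
      (fun x : V3 × V3 × V3 => (x.2.1, x.1, x.2.2))) volume volume :=
    (MeasurePreserving.id volume).prod mp_B3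
  have h2 : MeasurePreserving
      (MeasurableEquiv.prodAssoc.symm : V3 × V3 × (V3 × V3) ≃ᵐ (V3 × V3) × (V3 × V3))
      volume volume :=
    MeasurePreserving.symm _ volume_preserving_prodAssoc
  exact MeasurePreserving.comp h2 h1

lemma mp_rhoinv : MeasurePreserving
    (fun y : (V3 × V3) × V3 × V3 => (y.1.1, y.2.1, y.1.2, y.2.2))
    volume volume := by
  have h1 : MeasurePreserving
      (fun y : (V3 × V3) × V3 × V3 => (y.1.1, y.1.2, y.2))
      volume (volume : Measure (V3 × V3 × V3 × V3)) := by
    exact volume_preserving_prodAssoc (α₁ := V3) (β₁ := V3) (γ₁ := V3 × V3)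
  have h2 : MeasurePreserving (Prod.map (id : V3 → V3)
      (fun x : V3 × V3 × V3 => (x.2.1, x.1, x.2.2))) volume volume :=
    (MeasurePreserving.id volume).prod mp_B3
  have h3 := h2.comp h1
  exact h3

lemma mp_T (m : ℝ) (hm : 0 < m) : MeasurePreserving (Tmap m) volume volume :=
  (mp_rhoinv.comp ((mp_S m hm).prod (mp_S m hm))).comp mp_rho

lemma mp_sigma : MeasurePreserving sigmaMap volume volume := by
  have h1 : MeasurePreserving (Prod.map (id : V3 → V3) (Prod.map (id : V3 → V3)
      (Prod.swap : V3 × V3 → V3 × V3))) volume volume :=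
    (MeasurePreserving.id volume).prod ((MeasurePreserving.id volume).prod
      (Measure.measurePreserving_swap (μ := (volume : Measure V3)) (ν := volume)))
  exact (mp_B3 (γ := V3 × V3)).comp h1

lemma norm_sq_aux (m : ℝ) (hm : 0 < m) (P q : V3) :
    ‖(1 / (1 + m)) • P + q‖ ^ 2 + (1 / m) * ‖(m / (1 + m)) • P - q‖ ^ 2
      = (1 / (1 + m)) * ‖P‖ ^ 2 + ((1 + m) / m) * ‖q‖ ^ 2 := by
  have h1m : (0:ℝ) < 1 + m := by linarith
  rw [norm_add_sq_real, norm_sub_sq_real, norm_smul, norm_smul,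
    real_inner_smul_left, real_inner_smul_left, Real.norm_eq_abs, Real.norm_eq_abs,
    abs_of_pos (by positivity), abs_of_pos (by positivity)]
  field_simp
  ring

lemma complex_sq_aux (a b : ℂ) :
    (1 / 2) * ‖a - b‖ ^ 2 - ‖a‖ ^ 2
      = (1 / 2) * ‖b‖ ^ 2 - (1 / 2) * ‖a‖ ^ 2 - ((starRingEnd ℂ) a * b).re := by
  simp only [← Complex.normSq_eq_norm_sq, Complex.normSq_apply,
    Complex.mul_re, Complex.conj_re, Complex.conj_im, Complex.sub_re, Complex.sub_im]
  ring

lemma smul_sum_aux (m : ℝ) (hm : 0 < m) (P q : V3) :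
    (1 / (1 + m)) • P + q + ((m / (1 + m)) • P - q) = P := by
  have h1m : (0:ℝ) < 1 + m := by linarith
  have hc : (1:ℝ) / (1 + m) = 1 - m / (1 + m) := by field_simp; ring
  rw [hc]; module

lemma pointwise (m μ : ℝ) (hm : 0 < m) (hμ : 0 < μ)
    (u : V3 → V3 → V3 → ℂ) (w : V3 → V3 → V3 → ℝ)
    (hwPos : ∀ q P1 P2 : V3, 0 < w q P1 P2) (x : V3 × V3 × V3 × V3) :
    ((1 / 2) * ‖chiW m u w x.2.2.2 x.1 x.2.1 - chiW m u w x.2.2.1 x.2.1 x.1‖ ^ 2 -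
        ‖chiW m u w x.2.2.2 x.1 x.2.1‖ ^ 2) /
      (w x.2.2.2 x.1 x.2.1 * w x.2.2.1 x.2.1 x.1 *
        ((1 / (1 + m)) * (‖x.1‖ ^ 2 + ‖x.2.1‖ ^ 2) +
          ((1 + m) / m) * (‖x.2.2.1‖ ^ 2 + ‖x.2.2.2‖ ^ 2) + μ))
    = ((1 / 2) * ‖chiW m u w x.2.2.1 x.2.1 x.1‖ ^ 2 -
        (1 / 2) * ‖chiW m u w x.2.2.2 x.1 x.2.1‖ ^ 2) /
      (w x.2.2.2 x.1 x.2.1 * w x.2.2.1 x.2.1 x.1 *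
        ((1 / (1 + m)) * (‖x.1‖ ^ 2 + ‖x.2.1‖ ^ 2) +
          ((1 + m) / m) * (‖x.2.2.1‖ ^ 2 + ‖x.2.2.2‖ ^ 2) + μ))
      - (phi3Integrand m μ u (Tmap m x)).re := by
  obtain ⟨P1, P2, q1, q2⟩ := x
  have h1m : (0:ℝ) < 1 + m := by linarith
  set A := chiW m u w q2 P1 P2 with hA
  set B := chiW m u w q1 P2 P1 with hB
  set D : ℝ := (1 / (1 + m)) * (‖P1‖ ^ 2 + ‖P2‖ ^ 2) +
      ((1 + m) / m) * (‖q1‖ ^ 2 + ‖q2‖ ^ 2) + μ with hD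
  have hDpos : 0 < D := by rw [hD]; positivity
  have hw2 : w q2 P1 P2 ≠ 0 := (hwPos q2 P1 P2).ne'
  have hw1 : w q1 P2 P1 ≠ 0 := (hwPos q1 P2 P1).ne'
  have hkey : phi3Integrand m μ u (Tmap m (P1, P2, q1, q2)) =
      (starRingEnd ℂ) A * B / ((w q2 P1 P2 * w q1 P2 P1 * D : ℝ) : ℂ) := by
    have hden : h0 m ((1 / (1 + m)) • P1 + q1) ((1 / (1 + m)) • P2 + q2)
        ((m / (1 + m)) • P1 - q1) ((m / (1 + m)) • P2 - q2) + μ = D := by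
      have e1 := norm_sq_aux m hm P1 q1
      have e2 := norm_sq_aux m hm P2 q2
      simp only [h0, hD]
      linarith
    show (starRingEnd ℂ) (u ((1 / (1 + m)) • P1 + q1 + ((m / (1 + m)) • P1 - q1))
        ((1 / (1 + m)) • P2 + q2) ((m / (1 + m)) • P2 - q2)) *
        u ((1 / (1 + m)) • P2 + q2 + ((m / (1 + m)) • P2 - q2))
          ((1 / (1 + m)) • P1 + q1) ((m / (1 + m)) • P1 - q1) /
        ((h0 m ((1 / (1 + m)) • P1 + q1) ((1 / (1 + m)) • P2 + q2)
            ((m / (1 + m)) • P1 - q1) ((m / (1 + m)) • P2 - q2) + μ : ℝ) : ℂ) = _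
    rw [smul_sum_aux m hm P1 q1, smul_sum_aux m hm P2 q2, hden, hA, hB, chiW, chiW,
      map_mul, Complex.conj_ofReal]
    have hw1c : ((w q1 P2 P1 : ℝ) : ℂ) ≠ 0 := Complex.ofReal_ne_zero.mpr hw1
    have hw2c : ((w q2 P1 P2 : ℝ) : ℂ) ≠ 0 := Complex.ofReal_ne_zero.mpr hw2
    have hDc : ((D : ℝ) : ℂ) ≠ 0 := Complex.ofReal_ne_zero.mpr hDpos.ne'
    push_cast
    field_simp
  rw [complex_sq_aux A B, sub_div, hkey, Complex.div_ofReal_re]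

end Phi3CS

open Phi3CS in
/-- rewriting `φ3` by completing the square, with weight `w`.
The integration variables are `(P1, P2, q1, q2)`. -/
theorem phi3_complete_square (m μ : ℝ) (hm : 0 < m) (hμ : 0 < μ)
    (u : V3 → V3 → V3 → ℂ)
    (huL2 : MemLp (fun x : V3 × V3 × V3 => u x.1 x.2.1 x.2.2) 2 volume)
    (huInt : Integrable (phi3Integrand m μ u))
    (w : V3 → V3 → V3 → ℝ)
    (hwMeas : Measurable fun x : V3 × V3 × V3 => w x.1 x.2.1 x.2.2)
    (hwPos : ∀ q P1 P2 : V3, 0 < w q P1 P2)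
    (hInt : Integrable (fun x : V3 × V3 × V3 × V3 =>
      ((1 / 2) * ‖chiW m u w x.2.2.2 x.1 x.2.1 - chiW m u w x.2.2.1 x.2.1 x.1‖ ^ 2 -
          ‖chiW m u w x.2.2.2 x.1 x.2.1‖ ^ 2) /
        (w x.2.2.2 x.1 x.2.1 * w x.2.2.1 x.2.1 x.1 *
          ((1 / (1 + m)) * (‖x.1‖ ^ 2 + ‖x.2.1‖ ^ 2) +
            ((1 + m) / m) * (‖x.2.2.1‖ ^ 2 + ‖x.2.2.2‖ ^ 2) + μ)))) :
    phi3 m μ u =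
      ∫ x : V3 × V3 × V3 × V3,
        ((1 / 2) * ‖chiW m u w x.2.2.2 x.1 x.2.1 - chiW m u w x.2.2.1 x.2.1 x.1‖ ^ 2 -
            ‖chiW m u w x.2.2.2 x.1 x.2.1‖ ^ 2) /
          (w x.2.2.2 x.1 x.2.1 * w x.2.2.1 x.2.1 x.1 *
            ((1 / (1 + m)) * (‖x.1‖ ^ 2 + ‖x.2.1‖ ^ 2) +
              ((1 + m) / m) * (‖x.2.2.1‖ ^ 2 + ‖x.2.2.2‖ ^ 2) + μ)) := by
  have h1m : (0:ℝ) < 1 + m := by linarith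
  set G : V3 × V3 × V3 × V3 → ℝ := fun x =>
    ((1 / 2) * ‖chiW m u w x.2.2.2 x.1 x.2.1 - chiW m u w x.2.2.1 x.2.1 x.1‖ ^ 2 -
        ‖chiW m u w x.2.2.2 x.1 x.2.1‖ ^ 2) /
      (w x.2.2.2 x.1 x.2.1 * w x.2.2.1 x.2.1 x.1 *
        ((1 / (1 + m)) * (‖x.1‖ ^ 2 + ‖x.2.1‖ ^ 2) +
          ((1 + m) / m) * (‖x.2.2.1‖ ^ 2 + ‖x.2.2.2‖ ^ 2) + μ)) with hG
  set F : V3 × V3 × V3 × V3 → ℝ := fun x => (phi3Integrand m μ u (Tmap m x)).re with hF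
  set H : V3 × V3 × V3 × V3 → ℝ := fun x =>
    ((1 / 2) * ‖chiW m u w x.2.2.1 x.2.1 x.1‖ ^ 2 -
        (1 / 2) * ‖chiW m u w x.2.2.2 x.1 x.2.1‖ ^ 2) /
      (w x.2.2.2 x.1 x.2.1 * w x.2.2.1 x.2.1 x.1 *
        ((1 / (1 + m)) * (‖x.1‖ ^ 2 + ‖x.2.1‖ ^ 2) +
          ((1 + m) / m) * (‖x.2.2.1‖ ^ 2 + ‖x.2.2.2‖ ^ 2) + μ)) with hH
  have hGpt : ∀ x, G x = H x - F x := fun x => pointwise m μ hm hμ u w hwPos x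
  have hT := mp_T m hm
  have hTint : Integrable (fun x => phi3Integrand m μ u (Tmap m x)) volume :=
    (hT.integrable_comp huInt.aestronglyMeasurable).mpr huInt
  have hFint : Integrable F := by
    have := hTint.re
    simpa [hF, RCLike.re_to_complex] using this
  have hGint : Integrable G := hInt
  have hHint : Integrable H := by
    have heq : H = fun x => G x + F x := funext fun x => by have := hGpt x; linarith
    rw [heq]; exact hGint.add hFint
  have hσ := mp_sigma
  have hHσ : ∀ x, H (sigmaMap x) = - H x := by
    intro x
    obtain ⟨P1, P2, q1, q2⟩ := x
    simp only [hH, sigmaMap]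
    ring
  have hHzero : (∫ x, H x) = 0 := by
    have h1 : (∫ x, H x) = ∫ x, H (sigmaMap x) := by
      calc (∫ x, H x) = ∫ y, H y ∂(Measure.map sigmaMap volume) := by rw [hσ.map_eq]
        _ = ∫ x, H (sigmaMap x) := integral_map hσ.aemeasurable
            (by rw [hσ.map_eq]; exact hHint.aestronglyMeasurable)
    have h2 : (∫ x, H (sigmaMap x)) = - ∫ x, H x := by
      simp only [hHσ]
      exact integral_neg _
    linarith
  have hre : (∫ x, F x) = (∫ x, phi3Integrand m μ u (Tmap m x)).re := by
    have := integral_re hTint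
    simpa [hF, RCLike.re_to_complex] using this
  have hstep : (∫ x, G x) = - (∫ x, phi3Integrand m μ u (Tmap m x)).re := by
    calc (∫ x, G x) = ∫ x, (H x - F x) := by simp only [hGpt]
      _ = (∫ x, H x) - ∫ x, F x := integral_sub hHint hFint
      _ = - ∫ x, F x := by rw [hHzero]; ring
      _ = - (∫ x, phi3Integrand m μ u (Tmap m x)).re := by rw [hre]
  have hphi : phi3 m μ u = - (∫ x, phi3Integrand m μ u (Tmap m x)).re := by
    show - (∫ x : V3 × V3 × V3 × V3, phi3Integrand m μ u x).re = _
    congr 2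
    calc (∫ x, phi3Integrand m μ u x)
        = ∫ y, phi3Integrand m μ u y ∂(Measure.map (Tmap m) volume) := by rw [hT.map_eq]
      _ = ∫ x, phi3Integrand m μ u (Tmap m x) := integral_map hT.aemeasurable
          (by rw [hT.map_eq]; exact huInt.aestronglyMeasurable)
  rw [hphi, hstep]

end
end

section
/- For all m > 0 and all real r and κ, ( 1 + r² + (2(2+m)/(1+m)²) κ² )² − 4r²/(1+m)² ≥ ( m(m+2)/(1+m)² ) ( 1 + r² + (2√(2+m)/((1+m)√m)) κ² )². -/
open Real

/-- For all `m > 0` and real `r`, `κ`,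
`(1 + r² + (2(2+m)/(1+m)²)κ²)² − 4r²/(1+m)² ≥ (m(m+2)/(1+m)²)(1 + r² + (2√(2+m)/((1+m)√m))κ²)²`. -/
theorem denominator_lower_bound (m r κ : ℝ) (hm : 0 < m) :
    m * (m + 2) / (1 + m) ^ 2 *
        (1 + r ^ 2 + 2 * Real.sqrt (2 + m) / ((1 + m) * Real.sqrt m) * κ ^ 2) ^ 2 ≤
      (1 + r ^ 2 + 2 * (2 + m) / (1 + m) ^ 2 * κ ^ 2) ^ 2 - 4 * r ^ 2 / (1 + m) ^ 2 := by
  set u := Real.sqrt m with hu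
  set v := Real.sqrt (2 + m) with hv
  have hu0 : 0 < u := Real.sqrt_pos.mpr hm
  have hv0 : 0 < v := Real.sqrt_pos.mpr (by linarith)
  have hu2 : u ^ 2 = m := Real.sq_sqrt hm.le
  have hv2 : v ^ 2 = 2 + m := Real.sq_sqrt (by linarith)
  clear_value u v
  clear hu hv
  have hmm : m = u ^ 2 := hu2.symm
  subst hmm
  have huv : u * v ≤ 1 + u ^ 2 := by
    nlinarith [sq_nonneg (u - v), hu0, hv0]
  have hA : (0:ℝ) ≤ 1 + r ^ 2 := by positivity
  have hk : (0:ℝ) ≤ κ ^ 2 := sq_nonneg κ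
  have esq : (1 + r ^ 2 + 2 * v / ((1 + u ^ 2) * u) * κ ^ 2) ^ 2
      = (1 + r ^ 2) ^ 2 + 4 * (1 + r ^ 2) * v * κ ^ 2 / ((1 + u ^ 2) * u)
        + 4 * v ^ 2 * κ ^ 4 / ((1 + u ^ 2) ^ 2 * u ^ 2) := by
    field_simp
    ring
  rw [hv2] at esq
  rw [esq]
  have h2 : (0:ℝ) ≤ (4 * (1 + r ^ 2) * κ ^ 2 * (2 + u ^ 2)) * (1 + u ^ 2 - u * v) := by
    have : (0:ℝ) ≤ 1 + u ^ 2 - u * v := by linarith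
    positivity
  have h1 : (0:ℝ) ≤ (1 - r ^ 2) ^ 2 := sq_nonneg _
  rw [← sub_nonneg]
  have heq : (1 + r ^ 2 + 2 * (2 + u ^ 2) / (1 + u ^ 2) ^ 2 * κ ^ 2) ^ 2
        - 4 * r ^ 2 / (1 + u ^ 2) ^ 2
        - u ^ 2 * (u ^ 2 + 2) / (1 + u ^ 2) ^ 2 *
          ((1 + r ^ 2) ^ 2 + 4 * (1 + r ^ 2) * v * κ ^ 2 / ((1 + u ^ 2) * u)
            + 4 * (2 + u ^ 2) * κ ^ 4 / ((1 + u ^ 2) ^ 2 * u ^ 2))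
      = ((1 - r ^ 2) ^ 2 * (1 + u ^ 2)
          + (4 * (1 + r ^ 2) * κ ^ 2 * (2 + u ^ 2)) * (1 + u ^ 2 - u * v)) / (1 + u ^ 2) ^ 3 := by
    field_simp
    ring
  rw [heq]
  positivity
end

section
/- For all real c > 1 and κ > 0, ∫₀^∞ √(r²+κ²) / (1 + r² + cκ²)² dr = (1/2) (1/(1+cκ²)) [ 1 + (κ² / (√(1+cκ²) √(1+(c−1)κ²))) · ln( (√(1+cκ²) + √(1+(c−1)κ²)) / κ ) ]. -/
open MeasureTheory Real Filter

private lemma aux_deriv_eq (a b r s : ℝ) (ha : a ≠ 0) (hb : b ≠ 0) (hs : s ≠ 0)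
    (hinner : b * s + a * r ≠ 0) (hden : r ^ 2 + b ^ 2 ≠ 0)
    (hs2 : s ^ 2 = r ^ 2 + b ^ 2 - a ^ 2) :
    (1 / (2 * b ^ 2)) *
        ((((1 * s + r * (2 * r / (2 * s))) * (r ^ 2 + b ^ 2) - r * s * (2 * r)) / (r ^ 2 + b ^ 2) ^ 2) +
          ((b ^ 2 - a ^ 2) / (a * b)) *
            (((b * (2 * r / (2 * s)) + a * 1) / (b * s + a * r))
              - (1 / 2) * (2 * r / (r ^ 2 + b ^ 2)))) = s / (r ^ 2 + b ^ 2) ^ 2 := by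
  have hinner2 : b * s + r * a ≠ 0 := by rwa [mul_comm r a]
  field_simp
  linear_combination (-(r^2+b^2)*b^2*(a*s+b*r)) * hs2

set_option maxHeartbeats 1000000 in
/-- For `c > 1` and `κ > 0`,
`∫₀^∞ √(r²+κ²)/(1+r²+cκ²)² dr
  = (1/2)(1/(1+cκ²))[1 + (κ²/(√(1+cκ²)√(1+(c−1)κ²))) ln((√(1+cκ²)+√(1+(c−1)κ²))/κ)]`. -/
theorem integral_sqrt_div_sq (c κ : ℝ) (hc : 1 < c) (hκ : 0 < κ) :
    ∫ r in Set.Ioi (0 : ℝ),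
        Real.sqrt (r ^ 2 + κ ^ 2) / (1 + r ^ 2 + c * κ ^ 2) ^ 2 =
      1 / 2 * (1 / (1 + c * κ ^ 2)) *
        (1 + κ ^ 2 / (Real.sqrt (1 + c * κ ^ 2) * Real.sqrt (1 + (c - 1) * κ ^ 2)) *
          Real.log ((Real.sqrt (1 + c * κ ^ 2) + Real.sqrt (1 + (c - 1) * κ ^ 2)) / κ)) := by
  set b2 : ℝ := 1 + c * κ ^ 2 with hb2def
  set a2 : ℝ := 1 + (c - 1) * κ ^ 2 with ha2def
  have hb2 : 0 < b2 := by positivity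
  have ha2 : 0 < a2 := by nlinarith
  set b : ℝ := Real.sqrt b2 with hbdef
  set a : ℝ := Real.sqrt a2 with hadef
  have hb : 0 < b := Real.sqrt_pos.2 hb2
  have ha : 0 < a := Real.sqrt_pos.2 ha2
  have hbsq : b ^ 2 = b2 := Real.sq_sqrt hb2.le
  have hasq : a ^ 2 = a2 := Real.sq_sqrt ha2.le
  have hκ2 : κ ^ 2 = b ^ 2 - a ^ 2 := by rw [hbsq, hasq, hb2def, ha2def]; ring
  set F : ℝ → ℝ := fun r => (1 / (2 * b2)) *
      (r * Real.sqrt (r ^ 2 + κ ^ 2) / (r ^ 2 + b2) +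
        (κ ^ 2 / (a * b)) *
          (Real.log (b * Real.sqrt (r ^ 2 + κ ^ 2) + a * r) - Real.log κ
            - (1 / 2) * Real.log (r ^ 2 + b2))) with hFdef
  -- derivative
  have hderiv : ∀ r ∈ Set.Ici (0:ℝ),
      HasDerivAt F (Real.sqrt (r ^ 2 + κ ^ 2) / (1 + r ^ 2 + c * κ ^ 2) ^ 2) r := by
    intro r hr
    have hr0 : (0:ℝ) ≤ r := hr
    have hs2pos : 0 < r ^ 2 + κ ^ 2 := by positivity
    set s : ℝ := Real.sqrt (r ^ 2 + κ ^ 2) with hsdef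
    have hs : 0 < s := Real.sqrt_pos.2 hs2pos
    have hssq : s ^ 2 = r ^ 2 + κ ^ 2 := Real.sq_sqrt hs2pos.le
    have hds : HasDerivAt (fun x => Real.sqrt (x ^ 2 + κ ^ 2)) (2 * r / (2 * s)) r := by
      have h1 : HasDerivAt (fun x : ℝ => x ^ 2 + κ ^ 2) (2 * r) r := by
        simpa using (hasDerivAt_pow 2 r).add_const (κ ^ 2)
      exact h1.sqrt hs2pos.ne'
    have hd2 : HasDerivAt (fun x : ℝ => x ^ 2 + b2) (2 * r) r := by
      simpa using (hasDerivAt_pow 2 r).add_const b2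
    have hden : (0:ℝ) < r ^ 2 + b2 := by positivity
    have hinner : 0 < b * s + a * r :=
      add_pos_of_pos_of_nonneg (mul_pos hb hs) (mul_nonneg ha.le hr0)
    have hT1 : HasDerivAt (fun x => x * Real.sqrt (x ^ 2 + κ ^ 2) / (x ^ 2 + b2))
        (((1 * s + r * (2 * r / (2 * s))) * (r ^ 2 + b2) - r * s * (2 * r)) / (r ^ 2 + b2) ^ 2) r :=
      (hasDerivAt_id r |>.mul hds).div hd2 hden.ne'
    have hT2 : HasDerivAt (fun x => Real.log (b * Real.sqrt (x ^ 2 + κ ^ 2) + a * x))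
        ((b * (2 * r / (2 * s)) + a * 1) / (b * s + a * r)) r :=
      ((hds.const_mul b).add ((hasDerivAt_id r).const_mul a)).log hinner.ne'
    have hT3 : HasDerivAt (fun x => Real.log (x ^ 2 + b2)) (2 * r / (r ^ 2 + b2)) r :=
      hd2.log hden.ne'
    have hF : HasDerivAt F ((1 / (2 * b2)) *
        ((((1 * s + r * (2 * r / (2 * s))) * (r ^ 2 + b2) - r * s * (2 * r)) / (r ^ 2 + b2) ^ 2) +
          (κ ^ 2 / (a * b)) *
            (((b * (2 * r / (2 * s)) + a * 1) / (b * s + a * r))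
              - (1 / 2) * (2 * r / (r ^ 2 + b2))))) r :=
      ((hT1.add ((((hT2.sub_const (Real.log κ)).sub (hT3.const_mul (1/2 : ℝ)))).const_mul
        (κ ^ 2 / (a * b)))).const_mul (1 / (2 * b2)))
    refine hF.congr_deriv ?_
    have h1 : 1 + r ^ 2 + c * κ ^ 2 = r ^ 2 + b ^ 2 := by rw [hbsq, hb2def]; ring
    rw [h1, ← hbsq, hκ2]
    have hs2' : s ^ 2 = r ^ 2 + b ^ 2 - a ^ 2 := by rw [hssq, hκ2]; ring
    exact aux_deriv_eq a b r s ha.ne' hb.ne' hs.ne' hinner.ne'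
      (by rw [hbsq]; exact hden.ne') hs2'
  -- limit at infinity
  have htinv : Tendsto (fun r : ℝ => (r ^ 2)⁻¹) atTop (nhds 0) :=
    (tendsto_pow_atTop (two_ne_zero)).inv_tendsto_atTop
  have hlim1 : Tendsto (fun r : ℝ => r * Real.sqrt (r ^ 2 + κ ^ 2) / (r ^ 2 + b2))
      atTop (nhds 1) := by
    have hH : Tendsto (fun t : ℝ => Real.sqrt (1 + κ ^ 2 * t) / (1 + b2 * t)) (nhds 0)
        (nhds 1) := by
      have : ContinuousAt (fun t : ℝ => Real.sqrt (1 + κ ^ 2 * t) / (1 + b2 * t)) 0 := by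
        apply ContinuousAt.div
        · exact (Real.continuous_sqrt.comp (continuous_const.add (continuous_const.mul continuous_id))).continuousAt
        · exact (continuous_const.add (continuous_const.mul continuous_id)).continuousAt
        · simp
      simpa using this.tendsto
    refine (hH.comp htinv).congr' ?_
    filter_upwards [eventually_gt_atTop (0:ℝ)] with r hr
    have hsq : Real.sqrt (r ^ 2 + κ ^ 2) = r * Real.sqrt (1 + κ ^ 2 * (r ^ 2)⁻¹) := by
      have h := Real.sqrt_mul (sq_nonneg r) (1 + κ ^ 2 * (r ^ 2)⁻¹)
      rw [Real.sqrt_sq hr.le] at h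
      rw [← h]
      congr 1
      field_simp
    simp only [Function.comp]
    rw [hsq]
    have hd : (1 + b2 * (r ^ 2)⁻¹) = (r ^ 2 + b2) / r ^ 2 := by field_simp
    rw [hd]
    have hr2 : (0:ℝ) < r ^ 2 + b2 := by positivity
    field_simp
  have hratio : Tendsto (fun r : ℝ =>
      (b * Real.sqrt (r ^ 2 + κ ^ 2) + a * r) / Real.sqrt (r ^ 2 + b2)) atTop (nhds (b + a)) := by
    have hH : Tendsto (fun t : ℝ => (b * Real.sqrt (1 + κ ^ 2 * t) + a) / Real.sqrt (1 + b2 * t))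
        (nhds 0) (nhds (b + a)) := by
      have : ContinuousAt (fun t : ℝ => (b * Real.sqrt (1 + κ ^ 2 * t) + a) / Real.sqrt (1 + b2 * t)) 0 := by
        apply ContinuousAt.div
        · exact ((continuous_const.mul (Real.continuous_sqrt.comp
            (continuous_const.add (continuous_const.mul continuous_id)))).add
            continuous_const).continuousAt
        · exact (Real.continuous_sqrt.comp
            (continuous_const.add (continuous_const.mul continuous_id))).continuousAt
        · simp
      simpa using this.tendsto
    refine (hH.comp htinv).congr' ?_
    filter_upwards [eventually_gt_atTop (0:ℝ)] with r hr
    have hsq : Real.sqrt (r ^ 2 + κ ^ 2) = r * Real.sqrt (1 + κ ^ 2 * (r ^ 2)⁻¹) := by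
      have h := Real.sqrt_mul (sq_nonneg r) (1 + κ ^ 2 * (r ^ 2)⁻¹)
      rw [Real.sqrt_sq hr.le] at h
      rw [← h]; congr 1; field_simp
    have hsq2 : Real.sqrt (r ^ 2 + b2) = r * Real.sqrt (1 + b2 * (r ^ 2)⁻¹) := by
      have h := Real.sqrt_mul (sq_nonneg r) (1 + b2 * (r ^ 2)⁻¹)
      rw [Real.sqrt_sq hr.le] at h
      rw [← h]; congr 1; field_simp
    simp only [Function.comp]
    rw [hsq, hsq2]
    have h2 : (0:ℝ) < Real.sqrt (1 + b2 * (r ^ 2)⁻¹) := Real.sqrt_pos.2 (by positivity)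
    field_simp
  have hlim2 : Tendsto (fun r : ℝ =>
      Real.log (b * Real.sqrt (r ^ 2 + κ ^ 2) + a * r) - (1/2) * Real.log (r ^ 2 + b2))
      atTop (nhds (Real.log (b + a))) := by
    have hcomp := (Real.continuousAt_log (by positivity : (b + a) ≠ 0)).tendsto.comp hratio
    refine hcomp.congr' ?_
    filter_upwards [eventually_gt_atTop (0:ℝ)] with r hr
    have h1 : 0 < b * Real.sqrt (r ^ 2 + κ ^ 2) + a * r := by
      have := Real.sqrt_pos.2 (show (0:ℝ) < r ^ 2 + κ ^ 2 by positivity)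
      positivity
    have h2 : (0:ℝ) < r ^ 2 + b2 := by positivity
    simp only [Function.comp]
    rw [Real.log_div h1.ne' (Real.sqrt_pos.2 h2).ne', Real.log_sqrt h2.le]
    ring
  have hFlim : Tendsto F atTop (nhds ((1 / (2 * b2)) *
      (1 + (κ ^ 2 / (a * b)) * (Real.log (b + a) - Real.log κ)))) := by
    have := ((hlim1.add (((hlim2.sub_const (Real.log κ)).const_mul (κ ^ 2 / (a * b))))).const_mul
      (1 / (2 * b2)))
    refine this.congr' ?_
    filter_upwards with r
    simp only [hFdef]
    ring
  -- value at 0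
  have hF0 : F 0 = 0 := by
    have h1 : Real.sqrt ((0:ℝ) ^ 2 + κ ^ 2) = κ := by
      rw [show (0:ℝ) ^ 2 + κ ^ 2 = κ ^ 2 by ring, Real.sqrt_sq hκ.le]
    simp only [hFdef, h1]
    rw [show b * κ + a * 0 = b * κ by ring, Real.log_mul hb.ne' hκ.ne',
      show (0:ℝ) ^ 2 + b2 = b2 by ring, hbdef, Real.log_sqrt hb2.le]
    ring
  -- assemble
  have hnonneg : ∀ r ∈ Set.Ioi (0:ℝ),
      0 ≤ Real.sqrt (r ^ 2 + κ ^ 2) / (1 + r ^ 2 + c * κ ^ 2) ^ 2 := by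
    intro r _; positivity
  rw [integral_Ioi_of_hasDerivAt_of_nonneg' hderiv hnonneg hFlim, hF0,
    ← Real.log_div (by positivity) hκ.ne', sub_zero]
  field_simp
end

section
/- For every κ > 0, λ(1,κ) < 1/2, where λ(1,κ) = (4/(3π)) (1/(1+√3 κ²)) [ 1 + (κ² / (√(1+√3 κ²) √(1+(√3−1)κ²))) · ln( (√(1+√3 κ²) + √(1+(√3−1)κ²)) / κ ) ]. Consequently sup_{κ>0} λ(1,κ) ≤ 1/2. -/
open Real

noncomputable section

/-- `λ(1,κ)`, the function `λ(m,κ)` at `m = 1`, where `c₁ = √3`. -/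
def lamOne (κ : ℝ) : ℝ :=
  4 / (3 * π) * (1 / (1 + Real.sqrt 3 * κ ^ 2)) *
    (1 + κ ^ 2 /
        (Real.sqrt (1 + Real.sqrt 3 * κ ^ 2) * Real.sqrt (1 + (Real.sqrt 3 - 1) * κ ^ 2)) *
      Real.log ((Real.sqrt (1 + Real.sqrt 3 * κ ^ 2) +
          Real.sqrt (1 + (Real.sqrt 3 - 1) * κ ^ 2)) / κ))

lemma log_le_div_e {x : ℝ} (hx : 0 < x) : Real.log x ≤ x / Real.exp 1 := by
  have h := Real.log_le_sub_one_of_pos (x := x / Real.exp 1) (by positivity)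
  rw [Real.log_div hx.ne' (Real.exp_pos 1).ne', Real.log_exp] at h
  linarith

set_option maxHeartbeats 1000000 in
/-- `λ(1,κ) < 1/2` for every `κ > 0`; consequently `sup_{κ>0} λ(1,κ) ≤ 1/2`. -/
theorem lamOne_lt_half :
    (∀ κ : ℝ, 0 < κ → lamOne κ < 1 / 2) ∧
      sSup {y : ℝ | ∃ κ : ℝ, 0 < κ ∧ y = lamOne κ} ≤ 1 / 2 := by
  have key : ∀ κ : ℝ, 0 < κ → lamOne κ < 1 / 2 := by
    intro κ hκ
    have hπ := Real.pi_gt_d6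
    have he : (2.7182818283 : ℝ) < Real.exp 1 := Real.exp_one_gt_d9
    have he0 : (0 : ℝ) < Real.exp 1 := Real.exp_pos 1
    have hsq3 : (1.732 : ℝ) ≤ Real.sqrt 3 := by
      rw [show (1.732 : ℝ) = Real.sqrt (1.732 ^ 2) from
        (Real.sqrt_sq (by norm_num)).symm]
      exact Real.sqrt_le_sqrt (by norm_num)
    have hκ2 : 0 < κ ^ 2 := by positivity
    unfold lamOne
    set e := Real.exp 1 with hedef
    set A := 1 + Real.sqrt 3 * κ ^ 2 with hAdef
    set B := 1 + (Real.sqrt 3 - 1) * κ ^ 2 with hBdef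
    have hA1 : 1 ≤ A := by nlinarith
    have hB1 : 1 ≤ B := by nlinarith
    set a := Real.sqrt A with hadef
    set b := Real.sqrt B with hbdef
    have ha1 : 1 ≤ a := by
      rw [hadef]; exact Real.one_le_sqrt.mpr hA1
    have hb1 : 1 ≤ b := by
      rw [hbdef]; exact Real.one_le_sqrt.mpr hB1
    have ha0 : 0 < a := by linarith
    have hb0 : 0 < b := by linarith
    -- log bound
    have hlog : Real.log ((a + b) / κ) ≤ (a + b) / (κ * e) := by
      have := log_le_div_e (x := (a + b) / κ) (by positivity)
      rw [div_div] at this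
      exact this
    have h1 : κ ^ 2 / (a * b) * Real.log ((a + b) / κ) ≤
        κ ^ 2 / (a * b) * ((a + b) / (κ * e)) :=
      mul_le_mul_of_nonneg_left hlog (by positivity)
    have h2 : κ ^ 2 / (a * b) * ((a + b) / (κ * e)) ≤ 2 * κ / e := by
      rw [div_mul_div_comm, div_le_div_iff₀ (by positivity) (by positivity)]
      have hab : a + b ≤ 2 * (a * b) := by nlinarith
      nlinarith [mul_pos hκ he0, mul_pos (mul_pos ha0 hb0) (mul_pos hκ he0),
        mul_le_mul_of_nonneg_left hab (le_of_lt (mul_pos hκ2 (mul_pos hκ he0)))]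
    have hinner : 1 + κ ^ 2 / (a * b) * Real.log ((a + b) / κ) ≤ 1 + 2 * κ / e := by
      linarith
    have hcoef : (0 : ℝ) ≤ 4 / (3 * π) * (1 / A) := by positivity
    have hstep : 4 / (3 * π) * (1 / A) *
        (1 + κ ^ 2 / (a * b) * Real.log ((a + b) / κ)) ≤
        4 / (3 * π) * (1 / A) * (1 + 2 * κ / e) :=
      mul_le_mul_of_nonneg_left hinner hcoef
    have hfin : 4 / (3 * π) * (1 / A) * (1 + 2 * κ / e) < 1 / 2 := by
      have hA0 : 0 < A := by linarith
      have hπ0 : 0 < π := by linarith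
      rw [show 4 / (3 * π) * (1 / A) * (1 + 2 * κ / e) =
          (4 * (e + 2 * κ)) / (3 * π * A * e) by field_simp,
        div_lt_div_iff₀ (by positivity) (by norm_num)]
      have hA' : 1 + 1.732 * κ ^ 2 ≤ A := by nlinarith
      have he_up : e < 2.7182818286 := Real.exp_one_lt_d9
      have hpe : (25.6 : ℝ) < 3 * π * e := by nlinarith
      have hpe2 : 25.6 * κ ^ 2 < 3 * π * e * κ ^ 2 :=
        (mul_lt_mul_of_pos_right hpe hκ2)
      have h3 : 25.6 + 44.3 * κ ^ 2 < 3 * π * e * (1 + 1.732 * κ ^ 2) := by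
        nlinarith [hpe, hpe2]
      have h4 : 3 * π * e * (1 + 1.732 * κ ^ 2) ≤ 3 * π * A * e := by
        nlinarith [mul_le_mul_of_nonneg_left hA'
          (by positivity : (0:ℝ) ≤ 3 * π * e)]
      have h5 : 4 * (e + 2 * κ) * 2 < 21.75 + 16 * κ := by nlinarith
      have h6 : (21.75 : ℝ) + 16 * κ ≤ 25.6 + 44.3 * κ ^ 2 := by
        nlinarith [sq_nonneg (κ - 0.181)]
      nlinarith [h3, h4, h5, h6]
    linarith
  refine ⟨key, Real.sSup_le ?_ (by norm_num)⟩
  rintro y ⟨κ, hκ, rfl⟩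
  exact (key κ hκ).le

end
end
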